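/- In the neighbourhood Morse geometry of type (λ, n−λ) with n ≥ 3 and 2 ≤ λ ≤ n−1, fix a unit vector Θ ∈ ℝ^λ and define the future-inextendible timelike curve ω(t) = ((ε/2)e^{−t}Θ, 0) ∈ N for t ∈ [0,∞). Then the chronological past of ω equals the past region of the Morse point: {p ∈ N : p ≪ ω(t) for some t ≥ 0} = P = {(x,y) ∈ N : |y| < m₁|x|}. In particular this set is independent of the choice of the unit vector Θ. -/

import Mathlib

noncomputable section

open Set

/-- Points of `ℝⁿ = ℝ^λ × ℝ^{n−λ}`. -/
abbrev Pt (n lam : ℕ) := EuclideanSpace ℝ (Fin lam) × EuclideanSpace ℝ (Fin (n - lam))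

/-- The Euclidean inner product on `ℝⁿ = ℝ^λ × ℝ^{n−λ}`. -/
def iprod {n lam : ℕ} (v w : Pt n lam) : ℝ :=
  (inner ℝ v.1 w.1 : ℝ) + (inner ℝ v.2 w.2 : ℝ)

/-- The punctured ball `N = {p : 0 < |p| < ε}` (Euclidean norm). -/
def NN (n lam : ℕ) (ε : ℝ) : Set (Pt n lam) :=
  {p | 0 < ‖p.1‖ ^ 2 + ‖p.2‖ ^ 2 ∧ ‖p.1‖ ^ 2 + ‖p.2‖ ^ 2 < ε ^ 2}

/-- The Euclidean gradient of the Morse function `f(x,y) = −|x|² + |y|²`. -/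
def gradf {n lam : ℕ} (p : Pt n lam) : Pt n lam :=
  ((-2 : ℝ) • p.1, (2 : ℝ) • p.2)

/-- The Morse metric with flat auxiliary metric (as a quadratic form):
`g_p(w,w) = |∇f(p)|²⟨w,w⟩ − ζ⟨∇f(p),w⟩²`. -/
def gN (ζ : ℝ) {n lam : ℕ} (p w : Pt n lam) : ℝ :=
  iprod (gradf p) (gradf p) * iprod w w - ζ * iprod (gradf p) w ^ 2

def m1 (ζ : ℝ) : ℝ := (Real.sqrt ζ - 1) / Real.sqrt (ζ - 1)
def m2 (ζ : ℝ) : ℝ := (Real.sqrt ζ + 1) / Real.sqrt (ζ - 1)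

/-- A future-directed timelike curve: a C¹ curve in `N` with everywhere timelike,
future-pointing (`⟨∇f(γ), γ'⟩ > 0`) tangent. -/
def Timelike (ζ ε : ℝ) {n lam : ℕ} (γ γ' : ℝ → Pt n lam) : Prop :=
  (∀ t ∈ Icc (0 : ℝ) 1, HasDerivAt γ (γ' t) t) ∧
  ContinuousOn γ' (Icc (0 : ℝ) 1) ∧
  (∀ t ∈ Icc (0 : ℝ) 1, γ t ∈ NN n lam ε) ∧
  (∀ t ∈ Icc (0 : ℝ) 1, gN ζ (γ t) (γ' t) < 0) ∧
  (∀ t ∈ Icc (0 : ℝ) 1, 0 < iprod (gradf (γ t)) (γ' t))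

/-- The chronology relation `q ≪ p`. -/
def chron (ζ ε : ℝ) {n lam : ℕ} (q p : Pt n lam) : Prop :=
  ∃ γ γ', Timelike ζ ε γ γ' ∧ γ 0 = q ∧ γ 1 = p

def Iplus (ζ ε : ℝ) {n lam : ℕ} (q : Pt n lam) : Set (Pt n lam) :=
  {p ∈ NN n lam ε | chron ζ ε q p}

def Iminus (ζ ε : ℝ) {n lam : ℕ} (q : Pt n lam) : Set (Pt n lam) :=
  {p ∈ NN n lam ε | chron ζ ε p q}

/-- The common past `↓U` (interior in the open set `N` of the set of points
chronologically preceding every point of `U`). -/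
def downSet (ζ ε : ℝ) {n lam : ℕ} (U : Set (Pt n lam)) : Set (Pt n lam) :=
  interior {p ∈ NN n lam ε | ∀ u ∈ U, chron ζ ε p u}

/-- The common future `↑U`. -/
def upSet (ζ ε : ℝ) {n lam : ℕ} (U : Set (Pt n lam)) : Set (Pt n lam) :=
  interior {p ∈ NN n lam ε | ∀ u ∈ U, chron ζ ε u p}

/-
`P` is the region `(√ζ + 1)|y|² < (√ζ - 1)|x|²`, i.e. the set of points `p` at which `-p` is
future-directed timelike. At a boundary point of `P` every future-directed timelike vector points
out of `P` (Cauchy–Schwarz reduces this to a two-variable inequality), so a future-directed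
timelike curve never enters `P`: `P` is a past set, and it contains `ω`, hence the past of `ω`.

Conversely, write `p = (|x| e₁, y) ∈ P` and `Θ = cos θ e₁ + sin θ e₂` with `e₂ ⊥ e₁` (this
uses `λ ≥ 2`), and follow `γ(s) = e^{-cs} (|x| (cos θs e₁ + sin θs e₂), (1 - s) y)`. Its velocity
is `-c γ(s)` plus a term independent of `c`; since `-γ(s)` is timelike in `P`, the curve is
timelike for large `c`, and it ends at a point of `ω`.
-/

open Real Filter Module
open scoped RealInnerProductSpace

lemma one_lt_sqrt_of_one_lt {ζ : ℝ} (hζ : 1 < ζ) : 1 < √ζ := by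
  rwa [lt_sqrt zero_le_one, one_pow]

lemma m1_sq {ζ : ℝ} (hζ : 1 < ζ) : m1 ζ ^ 2 = (√ζ - 1) / (√ζ + 1) := by
  have hs := one_lt_sqrt_of_one_lt hζ
  rw [m1, div_pow, sq_sqrt (by linarith), div_eq_div_iff (by nlinarith) (by linarith)]
  linear_combination (√ζ - 1) * sq_sqrt (zero_le_one.trans hζ.le)

lemma iprod_gradf {n lam : ℕ} (p w : Pt n lam) :
    iprod (gradf p) w = 2 * ⟪p.2, w.2⟫ - 2 * ⟪p.1, w.1⟫ := by
  simp only [iprod, gradf, real_inner_smul_left]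
  ring

lemma gN_eq (ζ : ℝ) {n lam : ℕ} (p w : Pt n lam) :
    gN ζ p w = 4 * (‖p.1‖ ^ 2 + ‖p.2‖ ^ 2) * (‖w.1‖ ^ 2 + ‖w.2‖ ^ 2)
      - ζ * (2 * ⟪p.2, w.2⟫ - 2 * ⟪p.1, w.1⟫) ^ 2 := by
  simp only [gN, iprod, gradf, real_inner_smul_left, real_inner_self_eq_norm_sq, norm_smul,
    Real.norm_eq_abs, abs_neg, abs_two]
  ring

def coneGap (ζ : ℝ) {n lam : ℕ} (p : Pt n lam) : ℝ :=
  (√ζ - 1) * ‖p.1‖ ^ 2 - (√ζ + 1) * ‖p.2‖ ^ 2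

lemma coneGap_pos_iff {ζ : ℝ} (hζ : 1 < ζ) {n lam : ℕ} (p : Pt n lam) :
    0 < coneGap ζ p ↔ ‖p.2‖ < m1 ζ * ‖p.1‖ := by
  have hs := one_lt_sqrt_of_one_lt hζ
  have hm : 0 ≤ m1 ζ := div_nonneg (by linarith) (sqrt_nonneg _)
  rw [coneGap, sub_pos, ← pow_lt_pow_iff_left₀ (norm_nonneg _) (by positivity) two_ne_zero,
    mul_pow, m1_sq hζ, div_mul_eq_mul_div, lt_div_iff₀ (by linarith), mul_comm]

lemma HasDerivAt.coneGap (ζ : ℝ) {n lam : ℕ} {γ : ℝ → Pt n lam} {w : Pt n lam} {t : ℝ}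
    (h : HasDerivAt γ w t) :
    HasDerivAt (fun t ↦ coneGap ζ (γ t))
      (2 * ((√ζ - 1) * ⟪(γ t).1, w.1⟫ - (√ζ + 1) * ⟪(γ t).2, w.2⟫)) t := by
  have h₁ : HasDerivAt (fun t ↦ (γ t).1) w.1 t := hasFDerivAt_fst.comp_hasDerivAt (f := γ) t h
  have h₂ : HasDerivAt (fun t ↦ (γ t).2) w.2 t := hasFDerivAt_snd.comp_hasDerivAt (f := γ) t h
  exact ((h₁.norm_sq.const_mul (√ζ - 1)).sub (h₂.norm_sq.const_mul (√ζ + 1))).congr_deriv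
    (by ring)

lemma coneGap_deriv_neg_of_timelike {ζ : ℝ} (hζ : 1 < ζ) {n lam : ℕ} {p w : Pt n lam}
    (h0 : coneGap ζ p = 0) (hg : gN ζ p w < 0) (hf : 0 < iprod (gradf p) w) :
    (√ζ - 1) * ⟪p.1, w.1⟫ - (√ζ + 1) * ⟪p.2, w.2⟫ < 0 := by
  set s := √ζ
  set P := ⟪p.1, w.1⟫
  set Q := ⟪p.2, w.2⟫
  have hs : 1 < s := one_lt_sqrt_of_one_lt hζ
  rw [gN_eq, ← sq_sqrt (zero_le_one.trans hζ.le)] at hg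
  rw [iprod_gradf] at hf
  have hb : (s + 1) * ‖p.2‖ ^ 2 = (s - 1) * ‖p.1‖ ^ 2 := by rw [coneGap] at h0; linarith
  have csx : P * P ≤ ‖p.1‖ ^ 2 * ‖w.1‖ ^ 2 := by
    simpa only [real_inner_self_eq_norm_sq] using real_inner_mul_inner_self_le p.1 w.1
  have csy : Q * Q ≤ ‖p.2‖ ^ 2 * ‖w.2‖ ^ 2 := by
    simpa only [real_inner_self_eq_norm_sq] using real_inner_mul_inner_self_le p.2 w.2
  have hCS : (s - 1) * P ^ 2 + (s + 1) * Q ^ 2 ≤ (s - 1) * ‖p.1‖ ^ 2 * (‖w.1‖ ^ 2 + ‖w.2‖ ^ 2) := by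
    nlinarith [mul_le_mul_of_nonneg_left csx (by linarith : (0:ℝ) ≤ s - 1),
      mul_le_mul_of_nonneg_left csy (by linarith : (0:ℝ) ≤ s + 1)]
  have htime : 2 * s * ‖p.1‖ ^ 2 * (‖w.1‖ ^ 2 + ‖w.2‖ ^ 2) < s ^ 2 * (s + 1) * (Q - P) ^ 2 := by
    nlinarith [mul_lt_mul_of_pos_left hg (by linarith : (0:ℝ) < s + 1)]
  by_contra! hout
  set u := (s - 1) * P - (s + 1) * Q
  have hcross : s * (s ^ 2 - 1) * (Q - P) ^ 2 ≤ 2 * ((s - 1) * P ^ 2 + (s + 1) * Q ^ 2) := by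
    have key : 2 * ((s - 1) * P ^ 2 + (s + 1) * Q ^ 2) - s * (s ^ 2 - 1) * (Q - P) ^ 2
        = s * u ^ 2 + 2 * (s ^ 2 - 1) * u * (Q - P) := by ring
    have : 0 ≤ s ^ 2 - 1 := by nlinarith
    have : 0 ≤ Q - P := by linarith
    have : 0 ≤ s * u ^ 2 + 2 * (s ^ 2 - 1) * u * (Q - P) := by positivity
    linarith
  nlinarith [mul_le_mul_of_nonneg_left hcross (by linarith : (0:ℝ) ≤ s),
    mul_lt_mul_of_pos_left htime (by linarith : (0:ℝ) < s - 1)]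

lemma coneGap_pos_of_chron {ζ ε : ℝ} (hζ : 1 < ζ) {n lam : ℕ} {p q : Pt n lam}
    (h : chron ζ ε p q) (hq : 0 < coneGap ζ q) : 0 < coneGap ζ p := by
  obtain ⟨γ, γ', ⟨hd, -, -, hg, hf⟩, rfl, rfl⟩ := h
  by_contra! hp
  have hd' (t) (ht : t ∈ Icc (0 : ℝ) 1) := (hd t ht).coneGap ζ
  have := image_le_of_deriv_right_lt_deriv_boundary (B := fun _ ↦ 0) (B' := fun _ ↦ 0)
    (fun t ht ↦ (hd' t ht).continuousAt.continuousWithinAt)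
    (fun t ht ↦ (hd' t (Ico_subset_Icc_self ht)).hasDerivWithinAt) hp
    (fun _ ↦ hasDerivAt_const _ _)
    (fun t ht h0 ↦ by
      have := coneGap_deriv_neg_of_timelike hζ h0 (hg t (Ico_subset_Icc_self ht))
        (hf t (Ico_subset_Icc_self ht))
      linarith) (right_mem_Icc.2 zero_le_one)
  linarith

section GreatCircle

variable {E : Type*} [NormedAddCommGroup E] [InnerProductSpace ℝ E]

def greatCircle (e₁ e₂ : E) (φ : ℝ) : E := cos φ • e₁ + sin φ • e₂

lemma inner_greatCircle {e₁ e₂ : E} (he₁ : ‖e₁‖ = 1) (he₂ : ‖e₂‖ = 1) (he : ⟪e₁, e₂⟫ = 0)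
    (a b : ℝ) : ⟪greatCircle e₁ e₂ a, greatCircle e₁ e₂ b⟫ = cos (a - b) := by
  have he' : ⟪e₂, e₁⟫ = 0 := by rw [real_inner_comm, he]
  simp only [greatCircle, inner_add_left, inner_add_right, real_inner_smul_left,
    real_inner_smul_right, real_inner_self_eq_norm_sq, he₁, he₂, he, he', cos_sub]
  ring

lemma hasDerivAt_greatCircle (e₁ e₂ : E) (θ s : ℝ) :
    HasDerivAt (fun s ↦ greatCircle e₁ e₂ (θ * s)) (θ • greatCircle e₁ e₂ (θ * s + π / 2)) s := by
  have hθ := (hasDerivAt_id s).const_mul θ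
  refine ((hθ.cos.smul_const e₁).add (hθ.sin.smul_const e₂)).congr_deriv ?_
  simp only [greatCircle, id, mul_one, cos_add_pi_div_two, sin_add_pi_div_two]
  module

lemma exists_norm_eq_one_inner_eq_zero [FiniteDimensional ℝ E] (hE : 2 ≤ finrank ℝ E) (v : E) :
    ∃ u : E, ‖u‖ = 1 ∧ ⟪v, u⟫ = 0 := by
  have hpos : 0 < finrank ℝ (ℝ ∙ v)ᗮ := by
    have := Submodule.finrank_add_finrank_orthogonal (ℝ ∙ v)
    have : finrank ℝ (ℝ ∙ v) ≤ 1 := (finrank_span_le_card ({v} : Set E)).trans (by simp)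
    omega
  obtain ⟨⟨u, hu⟩, hu0⟩ := finrank_pos_iff_exists_ne_zero.1 hpos
  have hu0 : u ≠ 0 := by simpa using hu0
  refine ⟨‖u‖⁻¹ • u, by simp [norm_smul, hu0], ?_⟩
  rw [real_inner_smul_right,
    Submodule.inner_right_of_mem_orthogonal (Submodule.mem_span_singleton_self v) hu, mul_zero]

lemma exists_greatCircle_eq [FiniteDimensional ℝ E] (hE : 2 ≤ finrank ℝ E) {e₁ v : E}
    (he₁ : ‖e₁‖ = 1) (hv : ‖v‖ = 1) :
    ∃ (e₂ : E) (θ : ℝ), ‖e₂‖ = 1 ∧ ⟪e₁, e₂⟫ = 0 ∧ greatCircle e₁ e₂ θ = v := by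
  set a := ⟪e₁, v⟫
  set w := v - a • e₁
  have hw : ⟪e₁, w⟫ = 0 := by simp [w, a, inner_sub_right, real_inner_smul_right, he₁]
  obtain ⟨e₂, he₂, he₁₂, hwe₂⟩ : ∃ e₂ : E, ‖e₂‖ = 1 ∧ ⟪e₁, e₂⟫ = 0 ∧ w = ‖w‖ • e₂ := by
    rcases eq_or_ne w 0 with h0 | h0
    · obtain ⟨e₂, he₂, he₁₂⟩ := exists_norm_eq_one_inner_eq_zero hE e₁
      exact ⟨e₂, he₂, he₁₂, by simp [h0]⟩
    · refine ⟨‖w‖⁻¹ • w, by simp [norm_smul, h0], by rw [real_inner_smul_right, hw, mul_zero], ?_⟩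
      rw [smul_smul, mul_inv_cancel₀ (norm_ne_zero_iff.2 h0), one_smul]
  have hpyth : a ^ 2 + ‖w‖ ^ 2 = 1 := by
    have := norm_add_sq_real (a • e₁) w
    rw [show a • e₁ + w = v by simp [w], hv, real_inner_smul_left, hw, norm_smul, he₁] at this
    simp only [Real.norm_eq_abs, sq_abs, mul_one, mul_zero, add_zero] at this
    linarith
  refine ⟨e₂, arccos a, he₂, he₁₂, ?_⟩
  rw [greatCircle, cos_arccos (by nlinarith) (by nlinarith), sin_arccos,
    show 1 - a ^ 2 = ‖w‖ ^ 2 by linarith, sqrt_sq (norm_nonneg _), ← hwe₂]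
  simp [w]

end GreatCircle

section Spiral

variable {E F : Type*} [NormedAddCommGroup E] [InnerProductSpace ℝ E] [NormedAddCommGroup F]
  [InnerProductSpace ℝ F] (c θ α : ℝ) (e₁ e₂ : E) (y : F)

def spiral (s : ℝ) : E × F :=
  ((α * exp (-(c * s))) • greatCircle e₁ e₂ (θ * s), (exp (-(c * s)) * (1 - s)) • y)

def spiralDeriv (s : ℝ) : E × F :=
  ((α * exp (-(c * s))) • (θ • greatCircle e₁ e₂ (θ * s + π / 2) - c • greatCircle e₁ e₂ (θ * s)),
    (-(exp (-(c * s)) * (1 + c * (1 - s)))) • y)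

lemma hasDerivAt_spiral (s : ℝ) :
    HasDerivAt (spiral c θ α e₁ e₂ y) (spiralDeriv c θ α e₁ e₂ y s) s := by
  have hE : HasDerivAt (fun s ↦ exp (-(c * s))) (-(c * exp (-(c * s)))) s := by
    simpa [mul_comm] using ((hasDerivAt_id s).const_mul c).neg.exp
  refine (((hE.const_mul α).smul (hasDerivAt_greatCircle e₁ e₂ θ s)).prodMk
    ((hE.mul ((hasDerivAt_id s).const_sub 1)).smul_const y)).congr_deriv ?_
  simp only [spiralDeriv, id]
  congr 1
  · module
  · congr 1; ring

lemma continuous_spiralDeriv : Continuous (spiralDeriv c θ α e₁ e₂ y) := by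
  unfold spiralDeriv greatCircle
  fun_prop

end Spiral

section SpiralTimelike

variable {n lam : ℕ} {e₁ e₂ : EuclideanSpace ℝ (Fin lam)} (c θ α : ℝ)
  (y : EuclideanSpace ℝ (Fin (n - lam))) (s : ℝ)

lemma normSq_spiral (he₁ : ‖e₁‖ = 1) (he₂ : ‖e₂‖ = 1) (he : ⟪e₁, e₂⟫ = 0) :
    ‖(spiral c θ α e₁ e₂ y s).1‖ ^ 2 + ‖(spiral c θ α e₁ e₂ y s).2‖ ^ 2
      = exp (-(c * s)) ^ 2 * (α ^ 2 + (1 - s) ^ 2 * ‖y‖ ^ 2) := by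
  simp only [spiral, ← real_inner_self_eq_norm_sq, real_inner_smul_left, real_inner_smul_right,
    inner_greatCircle he₁ he₂ he, sub_self, cos_zero]
  ring

lemma iprod_gradf_spiral (he₁ : ‖e₁‖ = 1) (he₂ : ‖e₂‖ = 1) (he : ⟪e₁, e₂⟫ = 0) :
    iprod (gradf (spiral c θ α e₁ e₂ y s)) (spiralDeriv c θ α e₁ e₂ y s)
      = 2 * exp (-(c * s)) ^ 2 * (c * α ^ 2 - (1 - s) * (1 + c * (1 - s)) * ‖y‖ ^ 2) := by
  simp only [iprod_gradf, spiral, spiralDeriv, real_inner_smul_left, real_inner_smul_right,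
    inner_sub_right, inner_greatCircle he₁ he₂ he, sub_self, cos_zero, sub_add_cancel_left,
    cos_neg, cos_pi_div_two, real_inner_self_eq_norm_sq]
  ring

lemma gN_spiral (ζ : ℝ) (he₁ : ‖e₁‖ = 1) (he₂ : ‖e₂‖ = 1) (he : ⟪e₁, e₂⟫ = 0) :
    gN ζ (spiral c θ α e₁ e₂ y s) (spiralDeriv c θ α e₁ e₂ y s)
      = 4 * exp (-(c * s)) ^ 4 * ((α ^ 2 + (1 - s) ^ 2 * ‖y‖ ^ 2)
          * (α ^ 2 * (c ^ 2 + θ ^ 2) + (1 + c * (1 - s)) ^ 2 * ‖y‖ ^ 2)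
        - ζ * (c * α ^ 2 - (1 - s) * (1 + c * (1 - s)) * ‖y‖ ^ 2) ^ 2) := by
  rw [gN_eq]
  simp only [spiral, spiralDeriv, ← real_inner_self_eq_norm_sq, real_inner_smul_left,
    real_inner_smul_right, inner_sub_right, inner_sub_left, inner_greatCircle he₁ he₂ he,
    sub_self, cos_zero, sub_add_cancel_left, cos_neg, add_sub_cancel_left, cos_pi_div_two]
  ring

end SpiralTimelike

/-- The conditions `0 < iprod (gradf γ) γ'` and `gN ζ γ γ' < 0` along `spiral`, with `σ = 1 - s`,
`A = α ^ 2` and `B = ‖y‖ ^ 2`. -/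
lemma exists_decay_rate {ζ A B : ℝ} (hζ : 1 < ζ) (hB : 0 ≤ B)
    (hgap : (√ζ + 1) * B < (√ζ - 1) * A) (θ : ℝ) :
    ∃ c, 1 ≤ c ∧ ∀ σ ∈ Icc (0 : ℝ) 1, 0 < c * A - σ * (1 + c * σ) * B ∧
      (A + σ ^ 2 * B) * (A * (c ^ 2 + θ ^ 2) + (1 + c * σ) ^ 2 * B)
        < ζ * (c * A - σ * (1 + c * σ) * B) ^ 2 := by
  have hs := one_lt_sqrt_of_one_lt hζ
  have hBA : B < A := by nlinarith
  have hA : 0 < A := by linarith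
  have hQ : 0 < ζ * (A - B) ^ 2 - (A + B) ^ 2 := by
    rw [← sq_sqrt (zero_le_one.trans hζ.le)]
    nlinarith
  set Q := ζ * (A - B) ^ 2 - (A + B) ^ 2
  set K := 2 * (ζ + 2) * A ^ 2 + 2 * A ^ 2 * (θ ^ 2 + 1)
  obtain ⟨c, hc1, hcB, hcK⟩ : ∃ c, 1 ≤ c ∧ B / (A - B) < c ∧ K / Q < c :=
    ((eventually_ge_atTop 1).and ((eventually_gt_atTop _).and (eventually_gt_atTop _))).exists
  rw [div_lt_iff₀ (by linarith)] at hcB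
  rw [div_lt_iff₀ hQ] at hcK
  refine ⟨c, hc1, fun σ ⟨hσ0, hσ1⟩ ↦ ?_⟩
  have hσB : σ * B ≤ B := by nlinarith
  set v := σ ^ 2 * B
  have hv : v ≤ B := by nlinarith
  have hv0 : 0 ≤ v := by positivity
  refine ⟨by nlinarith, ?_⟩
  have key : ζ * (c * A - σ * (1 + c * σ) * B) ^ 2
      - (A + v) * (A * (c ^ 2 + θ ^ 2) + (1 + c * σ) ^ 2 * B)
      = c ^ 2 * (ζ * (A - v) ^ 2 - (A + v) ^ 2) - 2 * c * (σ * B * (ζ * (A - v) + (A + v)))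
        + ζ * (σ * B) ^ 2 - (A + v) * (A * θ ^ 2 + B) := by ring
  have hQv : Q ≤ ζ * (A - v) ^ 2 - (A + v) ^ 2 := by
    have h1 : 0 ≤ (B - v) * (2 * A - v - B) := mul_nonneg (by linarith) (by linarith)
    have h2 : 0 ≤ (B - v) * (2 * A + v + B) := mul_nonneg (by linarith) (by linarith)
    nlinarith [mul_nonneg (by linarith : (0:ℝ) ≤ ζ) h1]
  have hmid : σ * B * (ζ * (A - v) + (A + v)) ≤ (ζ + 2) * A ^ 2 := by
    have : ζ * (A - v) + (A + v) ≤ (ζ + 2) * A := by nlinarith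
    have : 0 ≤ ζ * (A - v) + (A + v) := by nlinarith
    nlinarith
  have hlast : (A + v) * (A * θ ^ 2 + B) ≤ 2 * A ^ 2 * (θ ^ 2 + 1) := by
    have := mul_le_mul (by linarith : A + v ≤ 2 * A)
      (by linarith : A * θ ^ 2 + B ≤ A * (θ ^ 2 + 1)) (by positivity) (by positivity)
    linarith
  nlinarith [mul_le_mul_of_nonneg_left hQv (sq_nonneg c),
    mul_le_mul_of_nonneg_left hmid (by linarith : (0:ℝ) ≤ 2 * c),
    mul_nonneg (by linarith : (0:ℝ) ≤ ζ) (sq_nonneg (σ * B)),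
    mul_lt_mul_of_pos_left hcK (by linarith : (0:ℝ) < c),
    mul_le_mul_of_nonneg_right hc1 (by positivity : (0:ℝ) ≤ 2 * A ^ 2 * (θ ^ 2 + 1))]

lemma chron_spiral {ζ ε : ℝ} (hζ : 1 < ζ) {n lam : ℕ} {e₁ e₂ : EuclideanSpace ℝ (Fin lam)}
    (he₁ : ‖e₁‖ = 1) (he₂ : ‖e₂‖ = 1) (he : ⟪e₁, e₂⟫ = 0) {α : ℝ}
    {y : EuclideanSpace ℝ (Fin (n - lam))} (hgap : (√ζ + 1) * ‖y‖ ^ 2 < (√ζ - 1) * α ^ 2)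
    (hε : α ^ 2 + ‖y‖ ^ 2 < ε ^ 2) (θ : ℝ) :
    ∃ c, 1 ≤ c ∧ chron ζ ε (α • e₁, y) ((α * exp (-c)) • greatCircle e₁ e₂ θ, 0) := by
  obtain ⟨c, hc1, hc⟩ := exists_decay_rate hζ (sq_nonneg _) hgap θ
  have hσ {s : ℝ} (hs : s ∈ Icc (0 : ℝ) 1) : 1 - s ∈ Icc (0 : ℝ) 1 :=
    ⟨by linarith [hs.2], by linarith [hs.1]⟩
  refine ⟨c, hc1, spiral c θ α e₁ e₂ y, spiralDeriv c θ α e₁ e₂ y,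
    ⟨fun s _ ↦ hasDerivAt_spiral c θ α e₁ e₂ y s,
      (continuous_spiralDeriv c θ α e₁ e₂ y).continuousOn, fun s hs ↦ ?_, fun s hs ↦ ?_,
      fun s hs ↦ ?_⟩, by simp [spiral, greatCircle], by simp [spiral]⟩
  · have hα : 0 < α ^ 2 := by nlinarith [one_lt_sqrt_of_one_lt hζ, sq_nonneg ‖y‖]
    have hE : exp (-(c * s)) ^ 2 ≤ 1 :=
      pow_le_one₀ (exp_pos _).le (exp_le_one_iff.2 (by nlinarith [hs.1]))
    have hσy : (1 - s) ^ 2 * ‖y‖ ^ 2 ≤ ‖y‖ ^ 2 :=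
      mul_le_of_le_one_left (sq_nonneg _) (pow_le_one₀ (hσ hs).1 (hσ hs).2)
    refine ⟨?_, ?_⟩ <;> rw [normSq_spiral c θ α y s he₁ he₂ he]
    · positivity
    · exact (mul_le_of_le_one_left (by positivity) hE).trans_lt (by linarith)
  · rw [gN_spiral c θ α y s ζ he₁ he₂ he]
    exact mul_neg_of_pos_of_neg (by positivity) (by linarith [(hc _ (hσ hs)).2])
  · rw [iprod_gradf_spiral c θ α y s he₁ he₂ he]
    exact mul_pos (by positivity) (hc _ (hσ hs)).1

lemma exists_chron_ray {n lam : ℕ} (hlam : 2 ≤ lam) {ζ ε : ℝ} (hζ : 1 < ζ) (hε : 0 < ε)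
    {Θ : EuclideanSpace ℝ (Fin lam)} (hΘ : ‖Θ‖ = 1) {p : Pt n lam} (hp : p ∈ NN n lam ε)
    (hgap : 0 < coneGap ζ p) :
    ∃ t, 0 ≤ t ∧ chron ζ ε p ((ε / 2 * exp (-t)) • Θ, 0) := by
  have hp₁ : p.1 ≠ 0 := by
    intro h
    rw [coneGap, h, norm_zero] at hgap
    nlinarith [one_lt_sqrt_of_one_lt hζ, sq_nonneg ‖p.2‖]
  set α := ‖p.1‖
  have hα : 0 < α := norm_pos_iff.2 hp₁
  set e₁ := α⁻¹ • p.1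
  have he₁ : ‖e₁‖ = 1 := norm_smul_inv_norm hp₁
  have hαe₁ : α • e₁ = p.1 := by simp [e₁, smul_smul, hα.ne']
  obtain ⟨e₂, θ, he₂, he, rfl⟩ := exists_greatCircle_eq (by simpa using hlam) he₁ hΘ
  obtain ⟨c, hc1, hc⟩ := chron_spiral hζ he₁ he₂ he (α := α) (y := p.2)
    (by rw [coneGap] at hgap; linarith) hp.2 θ
  have hαε : 2 * α / ε < 2 := by
    rw [div_lt_iff₀ hε]; nlinarith [hp.2, sq_nonneg ‖p.2‖]
  refine ⟨c - log (2 * α / ε), ?_, ?_⟩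
  · linarith [log_le_sub_one_of_pos (by positivity : 0 < 2 * α / ε)]
  · rw [neg_sub, exp_sub, exp_log (by positivity)]
    convert hc using 3
    · rw [hαe₁]
    · rw [exp_neg]
      field_simp

theorem stmt9_general (n lam : ℕ) (hlam1 : 2 ≤ lam)
    (ζ ε : ℝ) (hζ : 1 < ζ) (hε : 0 < ε)
    (Θ : EuclideanSpace ℝ (Fin lam)) (hΘ : ‖Θ‖ = 1) :
    {p : Pt n lam | p ∈ NN n lam ε ∧ ∃ t : ℝ, 0 ≤ t ∧
        chron ζ ε p ((ε / 2 * Real.exp (-t)) • Θ,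
          (0 : EuclideanSpace ℝ (Fin (n - lam))))} =
      {p ∈ NN n lam ε | ‖p.2‖ < m1 ζ * ‖p.1‖} := by
  ext p
  simp only [Set.mem_ofPred_eq, ← coneGap_pos_iff hζ]
  refine ⟨?_, fun ⟨hp, hgap⟩ ↦ ⟨hp, exists_chron_ray hlam1 hζ hε hΘ hp hgap⟩⟩
  rintro ⟨hp, t, -, hpω⟩
  refine ⟨hp, coneGap_pos_of_chron hζ hpω ?_⟩
  have := one_lt_sqrt_of_one_lt hζ
  have hr : 0 < ‖ε / 2 * exp (-t)‖ := norm_pos_iff.2 (by positivity)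
  simp only [coneGap, norm_smul, hΘ, mul_one, norm_zero]
  nlinarith [mul_pos (sub_pos.2 this) (pow_pos hr 2)]

/-- for `n ≥ 3`, `2 ≤ λ ≤ n−1`, the chronological past of the
future-inextendible timelike curve `ω(t) = ((ε/2)e^{−t}Θ, 0)` (with `‖Θ‖ = 1`)
equals the past region `P = {(x,y) ∈ N : |y| < m₁|x|}` of the Morse point;
in particular it is independent of the unit vector `Θ`. -/
theorem stmt9 (n lam : ℕ) (hn : 3 ≤ n) (hlam1 : 2 ≤ lam) (hlam2 : lam ≤ n - 1)
    (ζ ε : ℝ) (hζ : 1 < ζ) (hε : 0 < ε)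
    (Θ : EuclideanSpace ℝ (Fin lam)) (hΘ : ‖Θ‖ = 1) :
    {p : Pt n lam | p ∈ NN n lam ε ∧ ∃ t : ℝ, 0 ≤ t ∧
        chron ζ ε p ((ε / 2 * Real.exp (-t)) • Θ,
          (0 : EuclideanSpace ℝ (Fin (n - lam))))} =
      {p ∈ NN n lam ε | ‖p.2‖ < m1 ζ * ‖p.1‖} :=
  stmt9_general n lam hlam1 ζ ε hζ hε Θ hΘ
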